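/- For n ≥ 3, sdim(C_n) = ⌈n/2⌉. -/

import Mathlib

open SimpleGraph

variable {V : Type*} {W : Type*}

/-- `x` lies on some `y`–`z` geodesic in `G`. -/
def LiesOnGeodesic (G : SimpleGraph V) (x y z : V) : Prop :=
  G.dist y x + G.dist x z = G.dist y z

/-- A strong resolving set of `G`. -/
def IsStrongResolvingSet (G : SimpleGraph V) (S : Set V) : Prop :=
  ∀ x y : V, x ≠ y → ∃ z ∈ S,
    LiesOnGeodesic G x y z ∨ LiesOnGeodesic G y x z

/-- The strong metric dimension of a finite graph. -/
noncomputable def sdim (G : SimpleGraph V) [Fintype V] : ℕ :=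
  sInf {n : ℕ | ∃ S : Finset V, S.card = n ∧ IsStrongResolvingSet G ↑S}

/-- `u` is maximally distant from `v` in `G`. -/
def MaxDistFrom (G : SimpleGraph V) (u v : V) : Prop :=
  ∀ w : V, G.Adj u w → G.dist w v ≤ G.dist u v

/-- `u` and `v` are mutually maximally distant in `G`. -/
def MutMaxDist (G : SimpleGraph V) (u v : V) : Prop :=
  MaxDistFrom G u v ∧ MaxDistFrom G v u

/-- The strong resolving graph of `G` (on the full vertex set; vertices not in
any MMD pair are isolated). -/
def srGraph (G : SimpleGraph V) : SimpleGraph V where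
  Adj u v := u ≠ v ∧ MutMaxDist G u v
  symm := by
    constructor
    rintro u v ⟨h, h1, h2⟩
    exact ⟨h.symm, h2, h1⟩
  loopless := by constructor; rintro v ⟨h, -⟩; exact h rfl

/-- The cycle graph on `n` vertices (`n ≥ 3`), as a graph on `Fin n`. -/
def cycGraph (n : ℕ) : SimpleGraph (Fin n) where
  Adj i j := i ≠ j ∧ ((i.val + 1) % n = j.val ∨ (j.val + 1) % n = i.val)
  symm := by
    constructor
    rintro i j ⟨h, h'⟩
    exact ⟨h.symm, h'.symm⟩
  loopless := by constructor; rintro i ⟨h, -⟩; exact h rfl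

/-!
On `C_n` the distance from `u` to `v` is the length of the shorter arc,
`min (v - u) (n - (v - u))`, so it never exceeds `⌊n/2⌋`, and a vertex `i` and its antipode
`i + ⌊n/2⌋` realise this maximum. A geodesic through a vertex at maximal distance from its start
must end there, so every strong resolving set meets each antipodal pair; as `i ↦ i + ⌊n/2⌋` is
injective, this forces at least `⌈n/2⌉` vertices. Conversely, two vertices `x < y` outside the arc
`{0, …, ⌈n/2⌉ - 1}` are less than `⌊n/2⌋` apart, so `y` lies on the geodesic from `x` to its
antipode, and that antipode lies in the arc.
-/

namespace SimpleGraph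

variable {G : SimpleGraph V}

theorem Walk.apply_le_apply_add_length {f : V → ℕ} (hf : ∀ ⦃a b⦄, G.Adj a b → f b ≤ f a + 1)
    {u v : V} (p : G.Walk u v) : f v ≤ f u + p.length := by
  induction p with
  | nil => simp
  | cons h _ ih => rw [Walk.length_cons]; have := hf h; omega

theorem Reachable.apply_le_apply_add_dist {f : V → ℕ} (hf : ∀ ⦃a b⦄, G.Adj a b → f b ≤ f a + 1)
    {u v : V} (h : G.Reachable u v) : f v ≤ f u + G.dist u v := by
  obtain ⟨p, hp⟩ := h.exists_walk_length_eq_dist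
  exact hp ▸ p.apply_le_apply_add_length hf

theorem Connected.eq_of_liesOnGeodesic (hG : G.Connected) {x y z : V}
    (hx : ∀ w, G.dist y w ≤ G.dist y x) (h : LiesOnGeodesic G x y z) : x = z := by
  have : G.dist x z = 0 := by have := hx z; unfold LiesOnGeodesic at h; omega
  simpa [hG.preconnected x z] using (dist_eq_zero_iff_eq_or_not_reachable.mp this)

end SimpleGraph

section StrongResolving

variable {G : SimpleGraph V}

theorem liesOnGeodesic_endpoint (G : SimpleGraph V) (x y : V) : LiesOnGeodesic G x y x := by
  simp [LiesOnGeodesic]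

theorem isStrongResolvingSet_of_forall_notMem {S : Set V}
    (h : ∀ x y, x ∉ S → y ∉ S → x ≠ y → ∃ z ∈ S, LiesOnGeodesic G x y z ∨ LiesOnGeodesic G y x z) :
    IsStrongResolvingSet G S := by
  intro x y hxy
  by_cases hx : x ∈ S
  · exact ⟨x, hx, .inl (liesOnGeodesic_endpoint G x y)⟩
  by_cases hy : y ∈ S
  · exact ⟨y, hy, .inr (liesOnGeodesic_endpoint G y x)⟩
  exact h x y hx hy hxy

theorem isStrongResolvingSet_univ : IsStrongResolvingSet G Set.univ :=
  isStrongResolvingSet_of_forall_notMem fun _ _ hx => (hx trivial).elim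

theorem sdim_le [Fintype V] {S : Finset V} (hS : IsStrongResolvingSet G S) : sdim G ≤ S.card :=
  Nat.sInf_le ⟨S, rfl, hS⟩

theorem le_sdim [Fintype V] {k : ℕ} (h : ∀ S : Finset V, IsStrongResolvingSet G S → k ≤ S.card) :
    k ≤ sdim G :=
  le_csInf ⟨_, Finset.univ, rfl, by simpa using isStrongResolvingSet_univ⟩
    (by rintro _ ⟨S, rfl, hS⟩; exact h S hS)

theorem IsStrongResolvingSet.mem_or_mem {S : Set V} (hS : IsStrongResolvingSet G S)
    (hG : G.Connected) {x y : V} (hxy : x ≠ y) (hx : ∀ w, G.dist y w ≤ G.dist y x)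
    (hy : ∀ w, G.dist x w ≤ G.dist x y) : x ∈ S ∨ y ∈ S := by
  obtain ⟨z, hz, h | h⟩ := hS x y hxy
  · exact .inl (hG.eq_of_liesOnGeodesic hx h ▸ hz)
  · exact .inr (hG.eq_of_liesOnGeodesic hy h ▸ hz)

end StrongResolving

theorem Finset.card_le_two_mul_card_of_forall_mem_or_apply_mem {α : Type*} [Fintype α]
    [DecidableEq α] {f : α → α} (hf : f.Injective) {T : Finset α} (h : ∀ a, a ∈ T ∨ f a ∈ T) :
    Fintype.card α ≤ 2 * T.card := by
  have hdisj : Disjoint Tᶜ (Tᶜ.image f) := by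
    refine Finset.disjoint_left.mpr fun a ha hfa => ?_
    obtain ⟨b, hb, rfl⟩ := Finset.mem_image.mp hfa
    exact (h b).elim (Finset.mem_compl.mp hb) (Finset.mem_compl.mp ha)
  have := Finset.card_le_univ (Tᶜ ∪ Tᶜ.image f)
  rw [Finset.card_union_of_disjoint hdisj, Finset.card_image_of_injective _ hf,
    Finset.card_compl] at this
  have := T.card_le_univ
  omega

namespace Fin

variable {n : ℕ}

def circNorm (a : Fin n) : ℕ := min a.val (n - a.val)

theorem circNorm_le_half (a : Fin n) : a.circNorm ≤ n / 2 := by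
  unfold circNorm; omega

theorem circNorm_of_le_half {a : Fin n} (h : a.val ≤ n / 2) : a.circNorm = a.val := by
  unfold circNorm; omega

@[simp]
theorem circNorm_zero [NeZero n] : (0 : Fin n).circNorm = 0 := by
  simp [circNorm]

theorem val_add_one_eq [NeZero n] (a : Fin n) :
    (a + 1).val = if a.val + 1 = n then 0 else a.val + 1 := by
  obtain ⟨m, rfl⟩ := Nat.exists_eq_succ_of_ne_zero (NeZero.ne n)
  simp [Fin.val_add_one, Fin.ext_iff]

theorem circNorm_add_one_le [NeZero n] (a : Fin n) : (a + 1).circNorm ≤ a.circNorm + 1 := by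
  have := a.isLt
  simp only [circNorm, val_add_one_eq]
  split_ifs <;> omega

theorem circNorm_le_circNorm_add_one [NeZero n] (a : Fin n) :
    a.circNorm ≤ (a + 1).circNorm + 1 := by
  have := a.isLt
  simp only [circNorm, val_add_one_eq]
  split_ifs <;> omega

end Fin

section Cycle

variable {n : ℕ}

theorem cycGraph_adj_iff [NeZero n] {i j : Fin n} :
    (cycGraph n).Adj i j ↔ i ≠ j ∧ (i + 1 = j ∨ j + 1 = i) := by
  have hsucc (a : Fin n) : (a.val + 1) % n = (a + 1).val := by
    rw [Fin.val_add, Fin.val_one', Nat.add_mod_mod]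
  simp only [cycGraph, hsucc, ← Fin.ext_iff]

theorem exists_walk_cycGraph (hn : 2 ≤ n) (u v : Fin n) :
    ∃ p : (cycGraph n).Walk u v, p.length = (v - u).val := by
  have : NeZero n := ⟨by omega⟩
  have h1 : (1 : Fin n).val = 1 := Nat.mod_eq_of_lt hn
  suffices ∀ k v, (v - u).val = k → ∃ p : (cycGraph n).Walk u v, p.length = k from this _ v rfl
  intro k
  induction k with
  | zero =>
    intro v hv
    obtain rfl : v = u := sub_eq_zero.mp (Fin.ext hv)
    exact ⟨.nil, rfl⟩
  | succ k ih =>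
    intro v hv
    have hk : (v - 1 - u).val = k := by
      rw [sub_right_comm, Fin.sub_val_of_le (by rw [Fin.le_def]; omega), hv, h1]; rfl
    have hadj : (cycGraph n).Adj (v - 1) v := by
      refine cycGraph_adj_iff.mpr ⟨fun h => ?_, .inl (sub_add_cancel v 1)⟩
      have := congrArg Fin.val (sub_eq_self.mp h)
      rw [h1, Fin.val_zero] at this
      exact one_ne_zero this
    obtain ⟨p, hp⟩ := ih _ hk
    exact ⟨p.concat hadj, by simp [hp]⟩

theorem cycGraph_connected (hn : 2 ≤ n) : (cycGraph n).Connected :=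
  have : Nonempty (Fin n) := ⟨⟨0, by omega⟩⟩
  .mk fun u v => (exists_walk_cycGraph hn u v).elim fun p _ => p.reachable

theorem cycGraph_dist (hn : 2 ≤ n) (u v : Fin n) : (cycGraph n).dist u v = (v - u).circNorm := by
  have : NeZero n := ⟨by omega⟩
  refine le_antisymm ?_ ?_
  · rcases eq_or_ne u v with rfl | huv
    · simp
    obtain ⟨p, hp⟩ := exists_walk_cycGraph hn u v
    obtain ⟨q, hq⟩ := exists_walk_cycGraph hn v u
    have hback : (u - v).val = n - (v - u).val := by
      rw [← neg_sub, Fin.val_neg, if_neg (sub_ne_zero.mpr huv.symm)]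
    exact le_min (hp ▸ dist_le p) (by rw [dist_comm, ← hback, ← hq]; exact dist_le q)
  · have hlip : ∀ ⦃a b⦄, (cycGraph n).Adj a b → (b - u).circNorm ≤ (a - u).circNorm + 1 := by
      intro a b hab
      obtain ⟨-, rfl | rfl⟩ := cycGraph_adj_iff.mp hab
      · rw [add_sub_right_comm]; exact Fin.circNorm_add_one_le _
      · rw [add_sub_right_comm]; exact Fin.circNorm_le_circNorm_add_one _
    simpa using
      ((cycGraph_connected hn).preconnected u v).apply_le_apply_add_dist hlip

theorem cycGraph_dist_le_half (hn : 2 ≤ n) (u v : Fin n) : (cycGraph n).dist u v ≤ n / 2 :=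
  cycGraph_dist hn u v ▸ Fin.circNorm_le_half _

theorem cycGraph_dist_add_half (hn : 2 ≤ n) (u : Fin n) {k : Fin n} (hk : k.val = n / 2) :
    (cycGraph n).dist u (u + k) = n / 2 := by
  have : NeZero n := ⟨by omega⟩
  rw [cycGraph_dist hn, add_sub_cancel_left, Fin.circNorm_of_le_half hk.le, hk]

theorem liesOnGeodesic_cycGraph_add_half (hn : 2 ≤ n) {x y k : Fin n} (hk : k.val = n / 2)
    (hy : (y - x).val ≤ n / 2) : LiesOnGeodesic (cycGraph n) y x (x + k) := by
  have : NeZero n := ⟨by omega⟩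
  have hyz : x + k - y = k - (y - x) := by abel
  have hle : y - x ≤ k := Fin.le_def.mpr (hk ▸ hy)
  have hyz' : (x + k - y).val ≤ n / 2 := by rw [hyz, Fin.sub_val_of_le hle]; omega
  rw [LiesOnGeodesic, cycGraph_dist_add_half hn x hk, cycGraph_dist hn, cycGraph_dist hn,
    Fin.circNorm_of_le_half hy, Fin.circNorm_of_le_half hyz', hyz, Fin.sub_val_of_le hle]
  omega

theorem isStrongResolvingSet_cycGraph_Iio (hn : 2 ≤ n) {m : Fin n} (hm : (n + 1) / 2 ≤ m.val) :
    IsStrongResolvingSet (cycGraph n) (Set.Iio m) := by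
  have : NeZero n := ⟨by omega⟩
  obtain ⟨k, hk⟩ : ∃ k : Fin n, k.val = n / 2 := ⟨⟨n / 2, by omega⟩, rfl⟩
  have key : ∀ x y : Fin n, m ≤ x → x < y → ∃ z ∈ Set.Iio m, LiesOnGeodesic (cycGraph n) y x z := by
    intro x y hx hxy
    rw [Fin.le_def] at hx
    rw [Fin.lt_def] at hxy
    refine ⟨x + k, ?_, liesOnGeodesic_cycGraph_add_half hn hk ?_⟩
    · rw [Set.mem_Iio, Fin.lt_def, Fin.val_add_eq_ite, hk]
      split_ifs <;> omega
    · rw [Fin.sub_val_of_le hxy.le]; omega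
  refine isStrongResolvingSet_of_forall_notMem fun x y hx hy hxy => ?_
  simp only [Set.mem_Iio, not_lt] at hx hy
  rcases lt_or_gt_of_ne hxy with h | h
  · obtain ⟨z, hz, hgeo⟩ := key x y hx h
    exact ⟨z, hz, .inr hgeo⟩
  · obtain ⟨z, hz, hgeo⟩ := key y x hy h
    exact ⟨z, hz, .inl hgeo⟩

theorem IsStrongResolvingSet.mem_or_add_half_mem_cycGraph (hn : 2 ≤ n) {T : Set (Fin n)}
    (hT : IsStrongResolvingSet (cycGraph n) T) {k : Fin n} (hk : k.val = n / 2) (i : Fin n) :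
    i ∈ T ∨ i + k ∈ T := by
  have : NeZero n := ⟨by omega⟩
  have hik : i ≠ i + k := by
    intro h
    have := congrArg Fin.val (left_eq_add.mp h)
    simp only [Fin.val_zero, hk] at this
    omega
  refine hT.mem_or_mem (cycGraph_connected hn) hik (fun w => ?_) (fun w => ?_)
  · rw [SimpleGraph.dist_comm (u := i + k) (v := i), cycGraph_dist_add_half hn i hk]
    exact cycGraph_dist_le_half hn _ _
  · rw [cycGraph_dist_add_half hn i hk]
    exact cycGraph_dist_le_half hn _ _

end Cycle

theorem sdim_cycle (n : ℕ) (hn : 3 ≤ n) :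
    sdim (cycGraph n) = (n + 1) / 2 := by
  have hn2 : 2 ≤ n := by omega
  let k : Fin n := ⟨n / 2, by omega⟩
  let m : Fin n := ⟨(n + 1) / 2, by omega⟩
  refine le_antisymm ?_ (le_sdim fun T hT => ?_)
  · have hS := isStrongResolvingSet_cycGraph_Iio hn2 (m := m) le_rfl
    rw [← Finset.coe_Iio] at hS
    simpa [m] using sdim_le hS
  · have := Finset.card_le_two_mul_card_of_forall_mem_or_apply_mem (add_left_injective k)
      (hT.mem_or_add_half_mem_cycGraph hn2 (k := k) rfl)
    rw [Fintype.card_fin] at this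
    omega
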